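/- arXiv:2503.23122 — 2 statements merged into one kernel-verified Lean document; each statement's English description precedes it below -/
import Mathlib

section
/- For every n ≥ 1 and every n-Dyck path D, the product c_D = Π_{N∈D} c_N over the north steps N of D equals 1/(n+1). -/
open scoped RealInnerProductSpace
open MeasureTheory

attribute [local instance 0] Classical.propDecidable

noncomputable section

noncomputable def eVol (k : ℕ) {V : Type*} [NormedAddCommGroup V] [InnerProductSpace ℝ V]
    (A : Set V) : ℝ :=
  if h : ∃ f : EuclideanSpace ℝ (Fin k) →ᵃⁱ[ℝ] V, A ⊆ Set.range ⇑f then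
    (volume (⇑h.choose ⁻¹' A)).toReal
  else 0

noncomputable def alphaRoot (n i : ℕ) : EuclideanSpace ℝ (Fin (n+1)) :=
  if h : 1 ≤ i ∧ i ≤ n then
    EuclideanSpace.single (⟨i - 1, by omega⟩ : Fin (n+1)) 1 -
      EuclideanSpace.single (⟨i, by omega⟩ : Fin (n+1)) 1
  else 0

noncomputable def varpiWt (n i : ℕ) : EuclideanSpace ℝ (Fin (n+1)) :=
  (EuclideanSpace.equiv (Fin (n+1)) ℝ).symm
    (fun t => (if (t : ℕ) + 1 ≤ i then (1:ℝ) else 0) - (i : ℝ) / (n+1))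

noncomputable def permAct {m : ℕ} (w : Equiv.Perm (Fin m)) (v : EuclideanSpace ℝ (Fin m)) :
    EuclideanSpace ℝ (Fin m) :=
  (EuclideanSpace.equiv (Fin m) ℝ).symm (fun t => v (w⁻¹ t))

noncomputable def permutohedron (n : ℕ) (lam : EuclideanSpace ℝ (Fin (n+1))) :
    Set (EuclideanSpace ℝ (Fin (n+1))) :=
  convexHull ℝ {y | ∃ w : Equiv.Perm (Fin (n+1)), y = permAct w lam}

noncomputable def sRefl (n i : ℕ) : Equiv.Perm (Fin (n+1)) :=
  if h : 1 ≤ i ∧ i ≤ n then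
    Equiv.swap (⟨i - 1, by omega⟩ : Fin (n+1)) (⟨i, by omega⟩ : Fin (n+1))
  else 1

noncomputable def WJ (n : ℕ) (J : Set ℕ) : Subgroup (Equiv.Perm (Fin (n+1))) :=
  Subgroup.closure (sRefl n '' J)

def northCount (n : ℕ) (D : Fin (2*n) → Bool) (t : ℕ) : ℕ :=
  (Finset.univ.filter (fun s : Fin (2*n) => (s : ℕ) < t ∧ D s = true)).card

def IsDyck (n : ℕ) (D : Fin (2*n) → Bool) : Prop :=
  northCount n D (2*n) = n ∧ ∀ t ≤ 2*n, t ≤ 2 * northCount n D t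

instance (n : ℕ) : DecidablePred (IsDyck n) := fun D => by unfold IsDyck; infer_instance

def uOf (n : ℕ) (D : Fin (2*n) → Bool) (t : Fin (2*n)) : ℕ := (t : ℕ) - northCount n D (t : ℕ)

def KSet (n : ℕ) (D : Fin (2*n) → Bool) (t : Fin (2*n)) : Finset ℕ :=
  (Finset.Icc 1 (n - uOf n D t)).filter (fun k =>
    northCount n D ((t : ℕ) + 2*k) = northCount n D (t : ℕ) + k ∧
    ∀ m ∈ Finset.range (2*k+1), m + 2 * northCount n D (t : ℕ) ≤ 2 * northCount n D ((t : ℕ) + m))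

def dOf (n : ℕ) (D : Fin (2*n) → Bool) (t : Fin (2*n)) : ℕ := WithBot.unbotD 0 (KSet n D t).max
def iOf (n : ℕ) (D : Fin (2*n) → Bool) (t : Fin (2*n)) : ℕ := WithTop.untopD 0 (KSet n D t).min

noncomputable def cEnt (d i j : ℕ) : ℝ := ((min i j : ℕ) : ℝ) - (i * j : ℝ) / (d + 1)

noncomputable def Gamma' (d i u : ℕ) (x : ℕ → ℝ) : ℝ :=
  (1 / (d * Real.sqrt (cEnt d i i))) * (Nat.choose (d+1) i) *
    ∑ j ∈ Finset.Icc 1 d, cEnt d i j * x (j + u)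

noncomputable def GammaPrimeD (n : ℕ) (D : Fin (2*n) → Bool) (x : ℕ → ℝ) : ℝ :=
  ∏ t ∈ Finset.univ.filter (fun t => D t = true), Gamma' (dOf n D t) (iOf n D t) (uOf n D t) x

/-!
Cut `D` at its first return `(j, j)` to the diagonal: `D = N A E B` with `A` a `(j-1)`-Dyck path
and `B` an `(n-j)`-Dyck path. For the first north step, `K_N` is the set of diagonal points of `D`,
so `d = n`, `i = j` and `c_N = j (n + 1 - j) / (n + 1)`. Every other north step lies in `A` or in
`B`, and its set `K_N` is the same whether computed in `D` or in that factor: a segment starting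
inside `A` starts strictly above the diagonal, so it cannot pass through `(j, j)`. By induction the
product is `j (n + 1 - j) / (n + 1) · 1 / j · 1 / (n - j + 1) = 1 / (n + 1)`.
-/

open Finset

section NorthCount

variable {n : ℕ} {D : Fin (2*n) → Bool}

lemma northCount_zero : northCount n D 0 = 0 := by
  simp [northCount]

lemma northCount_succ {t : ℕ} (ht : t < 2*n) :
    northCount n D (t + 1) = northCount n D t + if D ⟨t, ht⟩ then 1 else 0 := by
  have hsplit : univ.filter (fun s : Fin (2*n) => (s : ℕ) < t + 1 ∧ D s = true) =
      univ.filter (fun s : Fin (2*n) => (s : ℕ) < t ∧ D s = true) ∪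
        univ.filter (fun s : Fin (2*n) => s = ⟨t, ht⟩ ∧ D s = true) := by
    ext s
    simp only [mem_filter, mem_univ, true_and, mem_union, Fin.ext_iff, ← or_and_right]
    exact and_congr_left fun _ => by omega
  rw [northCount, hsplit, card_union_of_disjoint, ← northCount]
  · congr 1
    split_ifs with hDt <;> simp [filter_and, filter_eq', hDt]
  · simp only [disjoint_filter, mem_univ, true_implies]
    rintro s hs ⟨rfl, -⟩
    exact lt_irrefl t hs.1

lemma northCount_of_le {t : ℕ} (ht : 2*n ≤ t) : northCount n D t = northCount n D (2*n) := by
  unfold northCount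
  congr 1
  refine filter_congr fun s _ => and_congr_left fun _ => ?_
  have := s.isLt
  omega

lemma northCount_mono : Monotone (northCount n D) := by
  intro a b hab
  exact card_le_card (monotone_filter_right _ fun _ _ h ↦ ⟨h.1.trans_le hab, h.2⟩)

lemma northCount_add_le (t m : ℕ) : northCount n D (t + m) ≤ northCount n D t + m := by
  induction m with
  | zero => rfl
  | succ m ih =>
    have hstep : northCount n D (t + m + 1) ≤ northCount n D (t + m) + 1 := by
      rcases lt_or_ge (t + m) (2*n) with h | h
      · rw [northCount_succ h]
        split <;> omega
      · rw [northCount_of_le h, northCount_of_le (by omega)]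
        omega
    rw [← add_assoc]
    omega

lemma northCount_le_self (t : ℕ) : northCount n D t ≤ t := by
  simpa [northCount_zero] using northCount_add_le (D := D) 0 t

lemma northCount_le_of_isDyck (hD : IsDyck n D) (t : ℕ) : northCount n D t ≤ n := by
  rcases le_total t (2*n) with h | h
  · exact (northCount_mono h).trans hD.1.le
  · exact (northCount_of_le h).trans hD.1 |>.le

end NorthCount

def subpath {n : ℕ} (D : Fin (2*n) → Bool) (a m : ℕ) (h : a + 2*m ≤ 2*n) :
    Fin (2*m) → Bool :=
  fun s => D ⟨a + s, by omega⟩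

/-- The condition defining `K_N`: translated to start at step `t`, the path passes through `(k, k)`
and stays weakly above the diagonal until then. -/
def IsDyckSegment (n : ℕ) (D : Fin (2*n) → Bool) (t k : ℕ) : Prop :=
  northCount n D (t + 2*k) = northCount n D t + k ∧
    ∀ m ∈ range (2*k + 1), m + 2 * northCount n D t ≤ 2 * northCount n D (t + m)

section Subpath

variable {n m a : ℕ} {D : Fin (2*n) → Bool} {h : a + 2*m ≤ 2*n}

lemma northCount_add_of_le_subpath {s : ℕ} (hs : s ≤ 2*m) :
    northCount n D (a + s) = northCount n D a + northCount m (subpath D a m h) s := by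
  induction s with
  | zero => simp [northCount_zero]
  | succ s ih =>
    rw [← add_assoc, northCount_succ (by omega), northCount_succ (by omega), ih (by omega),
      add_assoc]
    rfl

lemma subpath_subpath {b k : ℕ} (hk : b + 2*k ≤ 2*m) :
    subpath (subpath D a m h) b k hk = subpath D (a + b) k (by omega) := by
  funext s
  simp only [subpath, add_assoc]

lemma isDyck_subpath_iff : IsDyck m (subpath D a m h) ↔ IsDyckSegment n D a m := by
  have key : ∀ s ≤ 2*m,
      northCount n D (a + s) = northCount n D a + northCount m (subpath D a m h) s :=
    fun s hs => northCount_add_of_le_subpath hs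
  simp only [IsDyck, IsDyckSegment, mem_range, Nat.lt_succ_iff]
  constructor
  · rintro ⟨htop, hle⟩
    refine ⟨by rw [key _ le_rfl, htop], fun s hs => ?_⟩
    have := hle s hs
    rw [key s hs]
    omega
  · rintro ⟨htop, hle⟩
    refine ⟨by have := key _ le_rfl; omega, fun s hs => ?_⟩
    have := hle s hs
    rw [key s hs] at this
    omega

lemma isDyckSegment_subpath_iff {b k : ℕ} (hk : b + 2*k ≤ 2*m) :
    IsDyckSegment m (subpath D a m h) b k ↔ IsDyckSegment n D (a + b) k := by
  rw [← isDyck_subpath_iff (h := hk), subpath_subpath, isDyck_subpath_iff]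

end Subpath

lemma isDyck_subpath_of_northCount_eq {n k : ℕ} {D : Fin (2*n) → Bool} (hD : IsDyck n D)
    (hret : northCount n D (2*k) = k) {h : 2*k + 2*(n - k) ≤ 2*n} :
    IsDyck (n - k) (subpath D (2*k) (n - k) h) := by
  have hkn : k ≤ n := hret ▸ northCount_le_of_isDyck hD (2*k)
  rw [isDyck_subpath_iff]
  refine ⟨?_, fun s hs => ?_⟩
  · rw [show 2*k + 2*(n - k) = 2*n by omega, hD.1, hret]
    omega
  · have := hD.2 (2*k + s) (by rw [mem_range] at hs; omega)
    omega

section KSet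

variable {n : ℕ} {D : Fin (2*n) → Bool}

lemma mem_KSet_iff (hD : IsDyck n D) (t : Fin (2*n)) {k : ℕ} :
    k ∈ KSet n D t ↔ 1 ≤ k ∧ t + 2*k ≤ 2*n ∧ IsDyckSegment n D t k := by
  have hle := northCount_le_self (D := D) t
  have habove := hD.2 t t.isLt.le
  simp only [KSet, mem_filter, mem_Icc, uOf]
  constructor
  · rintro ⟨⟨hk, hku⟩, hseg⟩
    refine ⟨hk, ?_, hseg⟩
    by_contra! hlong
    have hend := northCount_of_le (D := D) hlong.le
    rw [hseg.1, hD.1] at hend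
    omega
  · rintro ⟨hk, hfit, hseg⟩
    refine ⟨⟨hk, ?_⟩, hseg⟩
    have := northCount_add_le (D := D) (t + 2*k) (2*n - (t + 2*k))
    rw [Nat.add_sub_cancel' hfit, hD.1, hseg.1] at this
    omega

lemma KSet_subpath {m a : ℕ} {h : a + 2*m ≤ 2*n} (hD : IsDyck n D)
    (hW : IsDyck m (subpath D a m h)) (s : Fin (2*m))
    (hfit : ∀ k ∈ KSet n D ⟨a + s, by omega⟩, s + 2*k ≤ 2*m) :
    KSet m (subpath D a m h) s = KSet n D ⟨a + s, by omega⟩ := by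
  ext k
  constructor
  · intro hk
    obtain ⟨hk1, hks, hseg⟩ := (mem_KSet_iff hW s).1 hk
    refine (mem_KSet_iff hD _).2 ⟨hk1, ?_, (isDyckSegment_subpath_iff hks).1 hseg⟩
    simp only
    omega
  · intro hk
    obtain ⟨hk1, -, hseg⟩ := (mem_KSet_iff hD _).1 hk
    have hks := hfit k hk
    exact (mem_KSet_iff hW s).2 ⟨hk1, hks, (isDyckSegment_subpath_iff hks).2 hseg⟩

lemma dOf_eq_max' {t : Fin (2*n)} (hK : (KSet n D t).Nonempty) :
    dOf n D t = (KSet n D t).max' hK := by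
  rw [dOf, ← coe_max' hK, WithBot.unbotD_coe]

lemma iOf_eq_min' {t : Fin (2*n)} (hK : (KSet n D t).Nonempty) :
    iOf n D t = (KSet n D t).min' hK := by
  rw [iOf, ← coe_min' hK, WithTop.untopD_coe]

end KSet

def stepFactor (n : ℕ) (D : Fin (2*n) → Bool) (s : ℕ) : ℝ :=
  if hs : s < 2*n then
    if D ⟨s, hs⟩ then cEnt (dOf n D ⟨s, hs⟩) (iOf n D ⟨s, hs⟩) (iOf n D ⟨s, hs⟩)
    else 1
  else 1

section StepFactor

variable {n : ℕ} {D : Fin (2*n) → Bool}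

lemma prod_cEnt_eq_prod_stepFactor :
    ∏ t ∈ univ.filter (fun t => D t = true), cEnt (dOf n D t) (iOf n D t) (iOf n D t) =
      ∏ s ∈ range (2*n), stepFactor n D s := by
  rw [prod_filter, ← Fin.prod_univ_eq_prod_range]
  exact prod_congr rfl fun t _ => by simp [stepFactor]

lemma prod_stepFactor_subpath {m a : ℕ} {h : a + 2*m ≤ 2*n} (hD : IsDyck n D)
    (hW : IsDyck m (subpath D a m h))
    (hfit : ∀ s (hs : s < 2*m), ∀ k ∈ KSet n D ⟨a + s, by omega⟩, s + 2*k ≤ 2*m) :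
    ∏ s ∈ range (2*m), stepFactor m (subpath D a m h) s =
      ∏ s ∈ Ico a (a + 2*m), stepFactor n D s := by
  rw [prod_Ico_eq_prod_range, Nat.add_sub_cancel_left]
  refine prod_congr rfl fun s hs => ?_
  rw [mem_range] at hs
  have hK := KSet_subpath hD hW ⟨s, hs⟩ (hfit s hs)
  simp only [stepFactor, dif_pos hs, dif_pos (show a + s < 2*n by omega), dOf, iOf, hK]
  rfl

lemma eq_true_iff_northCount_succ {t : ℕ} (ht : t < 2*n) :
    D ⟨t, ht⟩ = true ↔ northCount n D (t + 1) = northCount n D t + 1 := by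
  rw [northCount_succ ht]
  split <;> simp_all

end StepFactor

section FirstReturn

variable {n : ℕ} {D : Fin (2*n) → Bool} {h0 : 0 < 2*n}

lemma mem_KSet_zero_iff (hD : IsDyck n D) {k : ℕ} :
    k ∈ KSet n D ⟨0, h0⟩ ↔ 1 ≤ k ∧ k ≤ n ∧ northCount n D (2*k) = k := by
  rw [mem_KSet_iff hD]
  simp only [IsDyckSegment, zero_add, northCount_zero, mul_zero, add_zero, mem_range]
  constructor
  · rintro ⟨hk, hkn, hret, -⟩
    exact ⟨hk, by omega, hret⟩
  · rintro ⟨hk, hkn, hret⟩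
    exact ⟨hk, by omega, hret, fun s _ => hD.2 s (by omega)⟩

lemma dOf_zero (hD : IsDyck n D) : dOf n D ⟨0, h0⟩ = n := by
  have hmem : n ∈ KSet n D ⟨0, h0⟩ := (mem_KSet_zero_iff hD).2 ⟨by omega, le_rfl, hD.1⟩
  rw [dOf_eq_max' ⟨n, hmem⟩]
  exact le_antisymm (max'_le _ _ _ fun k hk => ((mem_KSet_zero_iff hD).1 hk).2.1)
    (le_max' _ _ hmem)

lemma iOf_zero_spec (hD : IsDyck n D) :
    1 ≤ iOf n D ⟨0, h0⟩ ∧ iOf n D ⟨0, h0⟩ ≤ n ∧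
      northCount n D (2 * iOf n D ⟨0, h0⟩) = iOf n D ⟨0, h0⟩ := by
  have hne : (KSet n D ⟨0, h0⟩).Nonempty :=
    ⟨n, (mem_KSet_zero_iff hD).2 ⟨by omega, le_rfl, hD.1⟩⟩
  rw [iOf_eq_min' hne]
  exact (mem_KSet_zero_iff hD).1 (min'_mem _ hne)

/-- `iOf n D 0` is the first return of `D` to the diagonal. -/
lemma lt_two_mul_northCount (hD : IsDyck n D) {t : ℕ} (ht0 : 0 < t)
    (ht : t < 2 * iOf n D ⟨0, h0⟩) : t < 2 * northCount n D t := by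
  refine (hD.2 t (by have := (iOf_zero_spec (h0 := h0) hD).2.1; omega)).lt_of_ne fun hdiag => ?_
  have hmem : northCount n D t ∈ KSet n D ⟨0, h0⟩ :=
    (mem_KSet_zero_iff hD).2 ⟨by omega, northCount_le_of_isDyck hD t, by rw [← hdiag]⟩
  have := iOf_eq_min' ⟨_, hmem⟩ ▸ min'_le _ _ hmem
  omega

lemma northCount_one (hD : IsDyck n D) (hn : 0 < n) : northCount n D 1 = 1 := by
  have h0 : 0 < 2*n := by omega
  have hj1 := (iOf_zero_spec (h0 := h0) hD).1
  have := lt_two_mul_northCount (h0 := h0) hD one_pos (by omega)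
  have := northCount_le_self (D := D) 1
  omega

lemma northCount_two_mul_iOf_zero_sub_one (hD : IsDyck n D) :
    northCount n D (2 * iOf n D ⟨0, h0⟩ - 1) = iOf n D ⟨0, h0⟩ := by
  obtain ⟨hj1, -, hret⟩ := iOf_zero_spec (h0 := h0) hD
  have := lt_two_mul_northCount (h0 := h0) hD (t := 2 * iOf n D ⟨0, h0⟩ - 1)
    (by omega) (by omega)
  have := northCount_mono (D := D) (Nat.sub_le (2 * iOf n D ⟨0, h0⟩) 1)
  omega

lemma add_two_mul_lt_of_isDyckSegment (hD : IsDyck n D) {t k : ℕ} (ht0 : 0 < t)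
    (ht : t < 2 * iOf n D ⟨0, h0⟩) (hseg : IsDyckSegment n D t k) :
    t + 2*k < 2 * iOf n D ⟨0, h0⟩ := by
  have hret := (iOf_zero_spec (h0 := h0) hD).2.2
  have hstrict := lt_two_mul_northCount hD ht0 ht
  by_contra! hlong
  -- the segment would pass through the first return `(j, j)`, strictly below its starting level
  have := hseg.2 (2 * iOf n D ⟨0, h0⟩ - t) (mem_range.2 (by omega))
  rw [Nat.add_sub_cancel' ht.le, hret] at this
  omega

lemma isDyck_subpath_one (hD : IsDyck n D) {h : 1 + 2 * (iOf n D ⟨0, h0⟩ - 1) ≤ 2*n} :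
    IsDyck (iOf n D ⟨0, h0⟩ - 1) (subpath D 1 (iOf n D ⟨0, h0⟩ - 1) h) := by
  have hj1 := (iOf_zero_spec (h0 := h0) hD).1
  have hN1 := northCount_one hD (by omega)
  rw [isDyck_subpath_iff]
  refine ⟨?_, fun s hs => ?_⟩
  · rw [show 1 + 2 * (iOf n D ⟨0, h0⟩ - 1) = 2 * iOf n D ⟨0, h0⟩ - 1 by omega,
      northCount_two_mul_iOf_zero_sub_one hD]
    omega
  · have := lt_two_mul_northCount (h0 := h0) hD (t := 1 + s) (by omega)
      (by rw [mem_range] at hs; omega)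
    omega

lemma stepFactor_zero (hD : IsDyck n D) :
    stepFactor n D 0 = cEnt n (iOf n D ⟨0, h0⟩) (iOf n D ⟨0, h0⟩) := by
  have hN0 : D ⟨0, h0⟩ = true := by
    rw [eq_true_iff_northCount_succ, zero_add, northCount_one hD (by omega), northCount_zero]
  rw [stepFactor, dif_pos h0, if_pos hN0, dOf_zero hD]

lemma stepFactor_two_mul_iOf_zero_sub_one (hD : IsDyck n D) :
    stepFactor n D (2 * iOf n D ⟨0, h0⟩ - 1) = 1 := by
  obtain ⟨hj1, hjn, hret⟩ := iOf_zero_spec (h0 := h0) hD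
  have hlt : 2 * iOf n D ⟨0, h0⟩ - 1 < 2*n := by omega
  have hE : D ⟨_, hlt⟩ = false := by
    rw [← Bool.not_eq_true, eq_true_iff_northCount_succ, Nat.sub_add_cancel (by omega), hret,
      northCount_two_mul_iOf_zero_sub_one hD]
    omega
  simp [stepFactor, hlt, hE]

end FirstReturn

lemma cEnt_self_mul_eq {d i : ℕ} (hi : 1 ≤ i) (hid : i ≤ d) :
    cEnt d i i * (1 / ((i - 1 : ℕ) + 1)) * (1 / ((d - i : ℕ) + 1)) = 1 / (d + 1) := by
  have hdi : (d : ℝ) - i + 1 ≠ 0 := by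
    have : (i : ℝ) ≤ d := by exact_mod_cast hid
    linarith
  have hi0 : (i : ℝ) ≠ 0 := by positivity
  rw [cEnt, min_self, Nat.cast_sub hi, Nat.cast_sub hid, Nat.cast_one, sub_add_cancel]
  field_simp
  ring

lemma prod_range_eq_mul_prod_Ico_mul_mul_prod_Ico {M : Type*} [CommMonoid M] (f : ℕ → M)
    {a b c : ℕ} (ha : 0 < a) (hab : a + 1 = b) (hbc : b ≤ c) :
    ∏ s ∈ range c, f s = f 0 * (∏ s ∈ Ico 1 a, f s) * f a * ∏ s ∈ Ico b c, f s := by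
  subst hab
  rw [← prod_range_mul_prod_Ico f hbc, prod_range_succ, range_eq_Ico,
    prod_eq_prod_Ico_succ_bot ha, zero_add]

theorem prod_stepFactor_of_isDyck (n : ℕ) (D : Fin (2*n) → Bool) (hD : IsDyck n D) :
    ∏ s ∈ range (2*n), stepFactor n D s = 1 / (n + 1) := by
  induction n using Nat.strong_induction_on with
  | _ n ih =>
  rcases Nat.eq_zero_or_pos n with rfl | hn
  · simp
  have h0 : 0 < 2*n := by omega
  obtain ⟨hj1, hjn, hret⟩ := iOf_zero_spec (h0 := h0) hD
  have hA := isDyck_subpath_one (h0 := h0) hD (h := by omega)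
  have hB := isDyck_subpath_of_northCount_eq hD hret (h := by omega)
  set j := iOf n D ⟨0, h0⟩
  have hfitA : ∀ s (hs : s < 2*(j-1)), ∀ k ∈ KSet n D ⟨1 + s, by omega⟩,
      s + 2*k ≤ 2*(j-1) := by
    intro s hs k hk
    have := add_two_mul_lt_of_isDyckSegment (h0 := h0) hD (t := 1 + s) (by omega) (by omega)
      ((mem_KSet_iff hD _).1 hk).2.2
    omega
  have hfitB : ∀ s (hs : s < 2*(n-j)), ∀ k ∈ KSet n D ⟨2*j + s, by omega⟩,
      s + 2*k ≤ 2*(n-j) := by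
    intro s hs k hk
    have := ((mem_KSet_iff hD _).1 hk).2.1
    simp only at this
    omega
  calc ∏ s ∈ range (2*n), stepFactor n D s
      = stepFactor n D 0 * (∏ s ∈ Ico 1 (1 + 2*(j-1)), stepFactor n D s) *
          stepFactor n D (2*j - 1) * ∏ s ∈ Ico (2*j) (2*j + 2*(n-j)), stepFactor n D s := by
        rw [prod_range_eq_mul_prod_Ico_mul_mul_prod_Ico _ (a := 2*j - 1) (by omega) (by omega)
          (show 2*j ≤ 2*n by omega), show 1 + 2*(j-1) = 2*j - 1 by omega,
          show 2*j + 2*(n-j) = 2*n by omega]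
    _ = cEnt n j j * (1 / ((j - 1 : ℕ) + 1)) * 1 * (1 / ((n - j : ℕ) + 1)) := by
        rw [← prod_stepFactor_subpath hD hA hfitA, ← prod_stepFactor_subpath hD hB hfitB,
          ih _ (by omega) _ hA, ih _ (by omega) _ hB, stepFactor_zero hD,
          stepFactor_two_mul_iOf_zero_sub_one hD]
    _ = 1 / (n + 1) := by
        rw [mul_one]
        exact cEnt_self_mul_eq hj1 hjn

theorem prod_cN_eq_one_div_n_succ_general
    (n : ℕ) (D : Fin (2*n) → Bool) (hD : IsDyck n D) :
    ∏ t ∈ Finset.univ.filter (fun t => D t = true),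
        cEnt (dOf n D t) (iOf n D t) (iOf n D t) = 1 / (n + 1) := by
  rw [prod_cEnt_eq_prod_stepFactor]
  exact prod_stepFactor_of_isDyck n D hD

theorem prod_cN_eq_one_div_n_succ
    (n : ℕ) (hn : 1 ≤ n) (D : Fin (2*n) → Bool) (hD : IsDyck n D) :
    ∏ t ∈ Finset.univ.filter (fun t => D t = true),
        cEnt (dOf n D t) (iOf n D t) (iOf n D t) = 1 / (n + 1) :=
  prod_cN_eq_one_div_n_succ_general n D hD
end
end

section
/- For every n ≥ 1, every dominant λ ∈ E and every 1 ≤ i ≤ n: (x, ϖ_i) ≤ (λ, ϖ_i) for all x ∈ P_n(λ), and P_n(λ) ∩ {x ∈ E : (x, ϖ_i) = (λ, ϖ_i)} = conv(W_{S∖{s_i}}·λ). That is, the affine hyperplane through λ with normal ϖ_i is a supporting hyperplane of the permutohedron, and the resulting exposed face is F^{s_i}(λ) = conv(W_{S∖{s_i}}·λ). -/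
open scoped RealInnerProductSpace
open MeasureTheory

attribute [local instance 0] Classical.propDecidable

noncomputable section

/-!
In coordinates, dominance of `λ` means that `λ` is antitone, and `⟪y, ϖ_i⟫` pairs `y` with the
antitone vector `ϖ_i`. By the rearrangement inequality `⟪wλ, ϖ_i⟫ ≤ ⟪λ, ϖ_i⟫` for every
permutation `w`, with equality iff the `i` largest entries of `wλ` sit in the first `i` slots.
Swapping equal entries then writes such a `wλ` as `w'λ` with `w'` in the stabiliser of
`{0, …, i - 1}`, which is the parabolic subgroup `W_{S∖{s_i}}`. Finally, a linear functional
bounded by `c` on a set `s` cuts `conv s` along `{f = c}` exactly in `conv (s ∩ {f = c})`.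
-/

open Equiv MulAction
open scoped Pointwise

section ConvexFace

variable {𝕜 E : Type*} [Field 𝕜] [LinearOrder 𝕜] [IsStrictOrderedRing 𝕜] [AddCommGroup E]
  [Module 𝕜 E]

theorem convexHull_subset_setOf_le {f : E →ₗ[𝕜] 𝕜} {s : Set E} {c : 𝕜}
    (h : ∀ x ∈ s, f x ≤ c) : convexHull 𝕜 s ⊆ {x | f x ≤ c} :=
  convexHull_min h (convex_halfSpace_le f.isLinear c)

theorem convexHull_inter_setOf_eq {f : E →ₗ[𝕜] 𝕜} {s : Set E} {c : 𝕜}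
    (h : ∀ x ∈ s, f x ≤ c) :
    convexHull 𝕜 s ∩ {x | f x = c} = convexHull 𝕜 (s ∩ {x | f x = c}) := by
  refine subset_antisymm ?_ (Set.subset_inter (convexHull_mono Set.inter_subset_left)
    (convexHull_min Set.inter_subset_right (convex_hyperplane f.isLinear c)))
  rintro x ⟨hx, hfx⟩
  obtain ⟨ι, _, w, z, hw₀, hw₁, hz, rfl⟩ := mem_convexHull_iff_exists_fintype.mp hx
  have hon : ∀ j, w j ≠ 0 → f (z j) = c := by
    have hsum : ∑ j, w j * (c - f (z j)) = 0 := by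
      simp only [mul_sub, Finset.sum_sub_distrib, ← Finset.sum_mul, hw₁, one_mul]
      simp only [Set.mem_ofPred_eq, map_sum, map_smul, smul_eq_mul] at hfx
      rw [hfx, sub_self]
    intro j hj
    have := (Finset.sum_eq_zero_iff_of_nonneg fun k _ ↦
      mul_nonneg (hw₀ k) (sub_nonneg.mpr (h _ (hz k)))).mp hsum j (Finset.mem_univ j)
    exact (sub_eq_zero.mp ((mul_eq_zero.mp this).resolve_left hj)).symm
  obtain ⟨j₀, hj₀⟩ : ∃ j, w j ≠ 0 := by
    by_contra! h0
    simp [h0] at hw₁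
  classical
  let z' j := if w j = 0 then z j₀ else z j
  refine mem_convexHull_of_exists_fintype w z' hw₀ hw₁ (fun j ↦ ?_) ?_
  · by_cases hj : w j = 0 <;> simp only [z', hj, if_true, if_false]
    exacts [⟨hz j₀, hon j₀ hj₀⟩, ⟨hz j, hon j hj⟩]
  · refine Finset.sum_congr rfl fun j _ ↦ ?_
    by_cases hj : w j = 0 <;> simp [z', hj]

end ConvexFace

section PermStabilizer

variable {α : Type*} [Fintype α] {T : Set α}

theorem mem_stabilizer_of_mapsTo {σ : Perm α} (h : ∀ a ∈ T, σ a ∈ T) :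
    σ ∈ stabilizer (Perm α) T :=
  (mem_stabilizer_set_iff_smul_set_subset T.toFinite).mpr (Set.smul_set_subset_iff.mpr h)

theorem stabilizer_le_of_swap_mem [DecidableEq α] {H : Subgroup (Perm α)}
    (h : ∀ a b, (a ∈ T ↔ b ∈ T) → swap a b ∈ H) : stabilizer (Perm α) T ≤ H := by
  intro σ hσ
  induction hN : σ.support.card using Nat.strong_induction_on generalizing σ with
  | _ N ih =>
  by_cases h1 : σ = 1
  · exact h1 ▸ one_mem H
  obtain ⟨a, ha⟩ : ∃ a, σ a ≠ a := not_forall.mp fun h => h1 (Perm.ext h)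
  have hside : a ∈ T ↔ σ a ∈ T := (mem_stabilizer_set.mp hσ a).symm
  have hrest : swap a (σ a) * σ ∈ H :=
    ih _ (hN ▸ Perm.card_support_swap_mul ha) (mul_mem (swap_mem_stabilizer.mpr hside) hσ) rfl
  simpa only [swap_mul_self_mul] using mul_mem (h a (σ a) hside) hrest

theorem exists_mem_stabilizer_comp_eq {β : Type*} [LinearOrder β] {f : α → β} {π : Perm α}
    (hf : ∀ a ∈ T, ∀ b ∉ T, f b ≤ f a) (hfπ : ∀ a ∈ T, ∀ b ∉ T, f (π b) ≤ f (π a)) :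
    ∃ ρ ∈ stabilizer (Perm α) T, f ∘ ρ = f ∘ π := by
  classical
  induction hN : (Finset.univ.filter fun a => a ∈ T ∧ π a ∉ T).card
    using Nat.strong_induction_on generalizing π with
  | _ N ih =>
  by_cases hmaps : ∀ a ∈ T, π a ∈ T
  · exact ⟨π, mem_stabilizer_of_mapsTo hmaps, rfl⟩
  push Not at hmaps
  obtain ⟨a, haT, haπ⟩ := hmaps
  obtain ⟨b, hbT, hbπ⟩ : ∃ b ∉ T, π b ∈ T := by
    by_contra! hb
    have hinv := inv_mem (mem_stabilizer_of_mapsTo (σ := π⁻¹) fun x hx =>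
      by_contra fun h => hb _ h (by simpa using hx))
    exact haπ ((mem_stabilizer_set.mp hinv a).mpr haT)
  -- `π a` and `π b` carry the same value, so swapping them does not change `f ∘ π`
  have hab : f (π a) = f (π b) := le_antisymm (hf _ hbπ _ haπ) (hfπ a haT b hbT)
  set π' := swap (π a) (π b) * π with hπ'
  have hcomp : ∀ x, f (π' x) = f (π x) := by
    intro x
    simp only [hπ', Perm.coe_mul, Function.comp_apply, swap_apply_def]
    split_ifs with h₁ h₂ <;> simp [*]
  have hlt : (Finset.univ.filter fun x => x ∈ T ∧ π' x ∉ T).card < N := by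
    refine hN ▸ Finset.card_lt_card ((Finset.ssubset_iff_of_subset ?_).mpr
      ⟨a, by simp [haT, haπ], by rw [Finset.mem_filter]; simp [π', hbπ]⟩)
    intro x hx
    simp only [Finset.mem_filter, Finset.mem_univ, true_and] at hx ⊢
    refine ⟨hx.1, fun hxπ => hx.2 ?_⟩
    rwa [hπ', Perm.coe_mul, Function.comp_apply, swap_apply_of_ne_of_ne] <;>
      intro h <;> simp only [EmbeddingLike.apply_eq_iff_eq] at h <;> subst h <;> simp_all
  obtain ⟨ρ, hρ, hρf⟩ := ih _ hlt (π := π') (by simpa only [hcomp] using hfπ) rfl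
  exact ⟨ρ, hρ, hρf.trans (funext hcomp)⟩

end PermStabilizer

section Rearrangement

variable {m : ℕ}

@[simp]
theorem permAct_apply (σ : Perm (Fin m)) (v : EuclideanSpace ℝ (Fin m)) (t : Fin m) :
    permAct σ v t = v (σ⁻¹ t) := rfl

theorem inner_eq_sum_smul (v z : EuclideanSpace ℝ (Fin m)) :
    inner ℝ v z = ∑ t, z t • v t := by
  simp [PiLp.inner_apply]

theorem inner_permAct (σ : Perm (Fin m)) (v z : EuclideanSpace ℝ (Fin m)) :
    inner ℝ (permAct σ v) z = ∑ t, z t • v (σ⁻¹ t) :=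
  inner_eq_sum_smul _ _

theorem inner_permAct_le {v z : EuclideanSpace ℝ (Fin m)} (hv : Antitone v) (hz : Antitone z)
    (σ : Perm (Fin m)) : inner ℝ (permAct σ v) z ≤ inner ℝ v z := by
  rw [inner_permAct, inner_eq_sum_smul]
  exact (hz.monovary hv).sum_smul_comp_perm_le_sum_smul

theorem inner_permAct_eq_iff {v z : EuclideanSpace ℝ (Fin m)} (hv : Antitone v)
    (hz : Antitone z) (σ : Perm (Fin m)) :
    inner ℝ (permAct σ v) z = inner ℝ v z ↔ Monovary z (v ∘ ⇑σ⁻¹) := by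
  rw [inner_permAct, inner_eq_sum_smul]
  exact (hz.monovary hv).sum_smul_comp_perm_eq_sum_smul_iff

end Rearrangement

section WeylGroup

variable {n : ℕ}

theorem sRefl_eq_swap (c : Fin n) : sRefl n (c + 1) = swap c.castSucc c.succ := by
  rw [sRefl, dif_pos ⟨by omega, c.isLt⟩]
  rfl

theorem swap_mem_WJ {i : ℕ} {a b : Fin (n + 1)} (hab : (a : ℕ) < i ↔ (b : ℕ) < i) :
    swap a b ∈ WJ n (Set.Icc 1 n \ {i}) := by
  wlog hle : a ≤ b generalizing a b
  · simpa only [swap_comm] using this hab.symm (le_of_not_ge hle)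
  induction b using Fin.induction generalizing a with
  | zero => rw [Fin.le_zero_iff.mp hle, swap_self]; exact one_mem _
  | succ c ih =>
    rcases hle.eq_or_lt with rfl | hlt
    · rw [swap_self]; exact one_mem _
    have hac : a ≤ c.castSucc := Fin.le_castSucc_iff.mpr hlt
    have hside : (a : ℕ) < i ↔ (c : ℕ) < i := by
      have : (a : ℕ) ≤ c := hac
      simp only [Fin.val_succ] at hab; omega
    have hgen : swap c.castSucc c.succ ∈ WJ n (Set.Icc 1 n \ {i}) := by
      rw [← sRefl_eq_swap]
      refine Subgroup.subset_closure ⟨c + 1, ⟨⟨by omega, c.isLt⟩, ?_⟩, rfl⟩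
      simp only [Fin.val_succ] at hab
      simp only [Set.mem_singleton_iff]; omega
    rcases hac.eq_or_lt with rfl | hac'
    · exact hgen
    rw [swap_comm, ← swap_mul_swap_mul_swap hac'.ne hlt.ne]
    exact mul_mem (mul_mem hgen (ih hside hac)) hgen

theorem WJ_eq_stabilizer (i : ℕ) :
    WJ n (Set.Icc 1 n \ {i}) =
      stabilizer (Perm (Fin (n + 1))) {t : Fin (n + 1) | (t : ℕ) < i} := by
  refine le_antisymm ((Subgroup.closure_le _).mpr ?_)
    (stabilizer_le_of_swap_mem fun _ _ => swap_mem_WJ)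
  rintro _ ⟨j, ⟨⟨hj1, hjn⟩, hji⟩, rfl⟩
  obtain ⟨c, rfl⟩ : ∃ c : Fin n, (c : ℕ) + 1 = j := ⟨⟨j - 1, by omega⟩, by simp; omega⟩
  rw [SetLike.mem_coe, sRefl_eq_swap, swap_mem_stabilizer]
  simp only [Set.mem_singleton_iff] at hji
  simp only [Set.mem_ofPred_eq, Fin.val_castSucc, Fin.val_succ]; omega

end WeylGroup

section Permutohedron

variable {n : ℕ}

theorem varpiWt_apply (i : ℕ) (t : Fin (n + 1)) :
    varpiWt n i t = (if (t : ℕ) < i then 1 else 0) - i / (n + 1) := by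
  simp [varpiWt]

theorem antitone_varpiWt (i : ℕ) : Antitone (varpiWt n i) := by
  intro s t hst
  have : (s : ℕ) ≤ t := hst
  simp only [varpiWt_apply]
  gcongr
  split_ifs <;> first | omega | norm_num

theorem sum_varpiWt {i : ℕ} (hi : i ≤ n + 1) : ∑ t, varpiWt n i t = 0 := by
  simp only [varpiWt_apply, Finset.sum_sub_distrib, Finset.sum_boole, Fin.card_filter_val_lt,
    Finset.sum_const, Finset.card_univ, Fintype.card_fin, nsmul_eq_mul]
  rw [min_eq_right hi]
  field_simp
  push_cast
  ring

theorem monovary_varpiWt_iff {i : ℕ} {g : Fin (n + 1) → ℝ} :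
    Monovary (varpiWt n i) g ↔
      ∀ s : Fin (n + 1), (s : ℕ) < i → ∀ t : Fin (n + 1), ¬ (t : ℕ) < i → g t ≤ g s := by
  constructor
  · intro h s hs t ht
    by_contra! hlt
    have := h hlt
    simp only [varpiWt_apply, if_pos hs, if_neg ht] at this
    linarith
  · intro h s t hlt
    simp only [varpiWt_apply]
    gcongr
    split_ifs with hs ht
    all_goals first | exact absurd hlt (not_lt.mpr (h s ‹_› t ‹_›)) | norm_num

theorem sum_smul_varpiWt_apply (s : Finset ℕ) (x : ℕ → ℝ) (t : Fin (n + 1)) :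
    (∑ j ∈ s, x j • varpiWt n j) t = ∑ j ∈ s, x j * varpiWt n j t := by
  simp

theorem antitone_sum_smul_varpiWt {s : Finset ℕ} {x : ℕ → ℝ} (hx : ∀ j ∈ s, 0 ≤ x j) :
    Antitone (∑ j ∈ s, x j • varpiWt n j : EuclideanSpace ℝ (Fin (n + 1))) := by
  intro a b hab
  rw [sum_smul_varpiWt_apply, sum_smul_varpiWt_apply]
  exact Finset.sum_le_sum fun j hj => mul_le_mul_of_nonneg_left (antitone_varpiWt j hab) (hx j hj)

theorem sum_sum_smul_varpiWt {s : Finset ℕ} (x : ℕ → ℝ) (hs : ∀ j ∈ s, j ≤ n + 1) :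
    ∑ t, (∑ j ∈ s, x j • varpiWt n j) t = 0 := by
  simp only [sum_smul_varpiWt_apply]
  rw [Finset.sum_comm]
  exact Finset.sum_eq_zero fun j hj => by rw [← Finset.mul_sum, sum_varpiWt (hs j hj), mul_zero]

end Permutohedron

section Face

variable {n : ℕ}

theorem inner_permAct_varpiWt_eq_iff {i : ℕ} {lam : EuclideanSpace ℝ (Fin (n + 1))}
    (hlam : Antitone lam) (w : Perm (Fin (n + 1))) :
    inner ℝ (permAct w lam) (varpiWt n i) = inner ℝ lam (varpiWt n i) ↔
      ∃ w' ∈ WJ n (Set.Icc 1 n \ {i}), permAct w' lam = permAct w lam := by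
  rw [inner_permAct_eq_iff hlam (antitone_varpiWt i), monovary_varpiWt_iff, WJ_eq_stabilizer]
  have hdom : ∀ s : Fin (n + 1), (s : ℕ) < i → ∀ t : Fin (n + 1), ¬ (t : ℕ) < i → lam t ≤ lam s :=
    fun s hs t ht => hlam (Fin.le_iff_val_le_val.mpr (by omega))
  constructor
  · intro h
    obtain ⟨ρ, hρ, hρlam⟩ := exists_mem_stabilizer_comp_eq hdom h
    refine ⟨ρ⁻¹, inv_mem hρ, PiLp.ext fun t => ?_⟩
    simp only [permAct_apply, inv_inv]
    exact congrFun hρlam t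
  · rintro ⟨w', hw', heq⟩ s hs t ht
    have hcoord : ∀ u, lam (w'⁻¹ u) = lam (w⁻¹ u) := fun u => by
      simpa using congrArg (· u) heq
    have hside := mem_stabilizer_set.mp (inv_mem hw')
    simp only [Function.comp_apply, ← hcoord]
    exact hdom _ ((hside s).mpr hs) _ (mt (hside t).mp ht)

theorem permutohedron_subset_sum_eq_zero {lam : EuclideanSpace ℝ (Fin (n + 1))}
    (hlam : ∑ t, lam t = 0) : permutohedron n lam ⊆ {y | ∑ t, y t = 0} := by
  refine convexHull_min ?_ ?_
  · rintro _ ⟨w, rfl⟩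
    change ∑ t, lam (w⁻¹ t) = 0
    rwa [Equiv.sum_comp]
  · have hsum : IsLinearMap ℝ fun y : EuclideanSpace ℝ (Fin (n + 1)) => ∑ t, y t := by
      constructor <;> intros <;> simp [Finset.sum_add_distrib, Finset.mul_sum]
    exact convex_hyperplane hsum 0

end Face

theorem supporting_hyperplane_and_exposed_face_general
    (n : ℕ) (x : ℕ → ℝ) (hx : ∀ i ∈ Finset.Icc 1 n, 0 ≤ x i)
    (i : ℕ)
    (lam : EuclideanSpace ℝ (Fin (n+1)))
    (hlam : lam = ∑ j ∈ Finset.Icc 1 n, x j • varpiWt n j) :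
    (∀ y ∈ permutohedron n lam,
        (inner ℝ y (varpiWt n i) : ℝ) ≤ (inner ℝ lam (varpiWt n i) : ℝ)) ∧
      permutohedron n lam ∩
          {y : EuclideanSpace ℝ (Fin (n+1)) | (∑ t, y t) = 0 ∧
            (inner ℝ y (varpiWt n i) : ℝ) = (inner ℝ lam (varpiWt n i) : ℝ)} =
        convexHull ℝ {y | ∃ w ∈ WJ n (Set.Icc 1 n \ {i}), y = permAct w lam} := by
  have hanti : Antitone lam := hlam ▸ antitone_sum_smul_varpiWt hx
  have hsum : ∑ t, lam t = 0 :=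
    hlam ▸ sum_sum_smul_varpiWt x fun j hj => (Finset.mem_Icc.mp hj).2.trans n.le_succ
  let f := (innerₗ (EuclideanSpace ℝ (Fin (n + 1)))).flip (varpiWt n i)
  have hvert : ∀ y ∈ {y | ∃ w, y = permAct w lam}, f y ≤ f lam := by
    rintro _ ⟨w, rfl⟩
    exact inner_permAct_le hanti (antitone_varpiWt i) w
  have hface : {y | ∃ w, y = permAct w lam} ∩ {y | f y = f lam} =
      {y | ∃ w ∈ WJ n (Set.Icc 1 n \ {i}), y = permAct w lam} := by
    ext y
    constructor
    · rintro ⟨⟨w, rfl⟩, hw⟩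
      obtain ⟨w', hw', heq⟩ := (inner_permAct_varpiWt_eq_iff hanti w).mp hw
      exact ⟨w', hw', heq.symm⟩
    · rintro ⟨w, hw, rfl⟩
      exact ⟨⟨w, rfl⟩, (inner_permAct_varpiWt_eq_iff hanti w).mpr ⟨w, hw, rfl⟩⟩
  refine ⟨fun y hy => convexHull_subset_setOf_le hvert hy, ?_⟩
  rw [Set.ofPred_and, ← Set.inter_assoc,
    Set.inter_eq_left.mpr (permutohedron_subset_sum_eq_zero hsum)]
  exact (convexHull_inter_setOf_eq hvert).trans (congrArg _ hface)

theorem supporting_hyperplane_and_exposed_face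
    (n : ℕ) (hn : 1 ≤ n) (x : ℕ → ℝ) (hx : ∀ i ∈ Finset.Icc 1 n, 0 ≤ x i)
    (i : ℕ) (hi : i ∈ Finset.Icc 1 n)
    (lam : EuclideanSpace ℝ (Fin (n+1)))
    (hlam : lam = ∑ j ∈ Finset.Icc 1 n, x j • varpiWt n j) :
    (∀ y ∈ permutohedron n lam,
        (inner ℝ y (varpiWt n i) : ℝ) ≤ (inner ℝ lam (varpiWt n i) : ℝ)) ∧
      permutohedron n lam ∩
          {y : EuclideanSpace ℝ (Fin (n+1)) | (∑ t, y t) = 0 ∧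
            (inner ℝ y (varpiWt n i) : ℝ) = (inner ℝ lam (varpiWt n i) : ℝ)} =
        convexHull ℝ {y | ∃ w ∈ WJ n (Set.Icc 1 n \ {i}), y = permAct w lam} :=
  supporting_hyperplane_and_exposed_face_general n x hx i lam hlam
end
end
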